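/- Let (R, +, ·) be a hyperring, e ∈ R, and Λₑ = λ^e_× ∪ α with transitive closure Λₑ*. Then Λₑ* is a strongly regular relation on both (R, +) and (R, ·), and the quotient R/Λₑ* is a commutative ring with identity Λₑ*(e). -/

import Mathlib

/-- A hyperoperation on `H`: every pair maps to a nonempty subset. -/
structure Hyperop (H : Type*) where
  op : H → H → Set H
  op_nonempty : ∀ x y, (op x y).Nonempty

namespace Hyperop

variable {H : Type*}

/-- Extension of the hyperoperation to subsets. -/
def sop (h : Hyperop H) (A B : Set H) : Set H := ⋃ a ∈ A, ⋃ b ∈ B, h.op a b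

/-- Associativity of a hyperoperation (on sets). -/
def IsAssoc (h : Hyperop H) : Prop :=
  ∀ x y z : H, h.sop (h.op x y) {z} = h.sop {x} (h.op y z)

/-- Reproduction axiom: `x ∘ H = H ∘ x = H`. -/
def IsReproductive (h : Hyperop H) : Prop :=
  ∀ x y : H, (∃ u, y ∈ h.op x u) ∧ (∃ v, y ∈ h.op v x)

/-- A relation `T` is strongly regular (on both sides) w.r.t. `h`. -/
def StronglyRegular (h : Hyperop H) (T : H → H → Prop) : Prop :=
  ∀ x y, T x y → ∀ a : H,
    (∀ u ∈ h.op a x, ∀ v ∈ h.op a y, T u v) ∧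
    (∀ u ∈ h.op x a, ∀ v ∈ h.op y a, T u v)

/-- `h.foldl x l` : the set `x ∘ l₁ ∘ ⋯ ∘ lₖ`. -/
def foldl (h : Hyperop H) : H → List H → Set H
  | x, [] => {x}
  | x, y :: l => ⋃ z ∈ h.op x y, h.foldl z l

/-- Hyper-"product" of a nonempty list of elements (empty list gives `∅`). -/
def listProd (h : Hyperop H) : List H → Set H
  | [] => ∅
  | x :: l => h.foldl x l

/-- Fold a list of subsets onto a subset. -/
def setFold (h : Hyperop H) : Set H → List (Set H) → Set H
  | A, [] => A
  | A, B :: l => h.setFold (h.sop A B) l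

end Hyperop

/-- `l'` is obtained from `l` by inserting one consecutive block of copies of `e`
(or is equal to `l`). -/
def InsertBlock {α : Type*} (e : α) (l l' : List α) : Prop :=
  l' = l ∨ ∃ (p q : List α) (k : ℕ), 1 ≤ k ∧ l = p ++ q ∧ l' = p ++ List.replicate k e ++ q

/-- A hyperring: `(R, +)` a hypergroup, `(R, ·)` a semi-hypergroup,
with two-sided distributivity. -/
structure Hyperring (R : Type*) where
  add : Hyperop R
  mul : Hyperop R
  add_assoc : add.IsAssoc
  add_repro : add.IsReproductive
  mul_assoc : mul.IsAssoc
  left_distrib : ∀ x y z : R, mul.sop {x} (add.op y z) = add.sop (mul.op x y) (mul.op x z)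
  right_distrib : ∀ x y z : R, mul.sop (add.op y z) {x} = add.sop (mul.op y x) (mul.op z x)

namespace Hyperring

variable {R : Type*}

/-- Sum of products: `ll` is a list of lists; each inner list is multiplied,
the results are added up. -/
def SOP (S : Hyperring R) : List (List R) → Set R
  | [] => ∅
  | l :: t => S.add.setFold (S.mul.listProd l) (t.map S.mul.listProd)

/-- A valid sum-of-products expression: nonempty list of nonempty lists. -/
def ValidExpr (S : Hyperring R) (ll : List (List R)) : Prop :=
  ll ≠ [] ∧ ∀ l ∈ ll, l ≠ []

/-- The Vougiouklis relation `Γ`. -/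
def gamma (S : Hyperring R) (x y : R) : Prop :=
  ∃ ll, S.ValidExpr ll ∧ x ∈ S.SOP ll ∧ y ∈ S.SOP ll

/-- The relation `α₊` : permuting the summands. -/
def alphaPlus (S : Hyperring R) (x y : R) : Prop :=
  ∃ ll ll', S.ValidExpr ll ∧ ll.Perm ll' ∧ x ∈ S.SOP ll ∧ y ∈ S.SOP ll'

/-- The relation `α×` : permuting the factors inside each product. -/
def alphaTimes (S : Hyperring R) (x y : R) : Prop :=
  ∃ ll ll', S.ValidExpr ll ∧ List.Forall₂ List.Perm ll ll' ∧ x ∈ S.SOP ll ∧ y ∈ S.SOP ll'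

/-- The Davvaz–Vougiouklis relation `α` : permuting factors inside each
product and then permuting the summands. -/
def alpha (S : Hyperring R) (x y : R) : Prop :=
  ∃ ll mid ll', S.ValidExpr ll ∧ List.Forall₂ List.Perm ll mid ∧ mid.Perm ll' ∧
    x ∈ S.SOP ll ∧ y ∈ S.SOP ll'

/-- Condition `𝔓ₑ` : each product of the second expression is obtained from the
corresponding product of the first by inserting a block of copies of `e`. -/
def CondP (S : Hyperring R) (e : R) (ll ll' : List (List R)) : Prop :=
  List.Forall₂ (InsertBlock e) ll ll'

/-- The relation `(λ^e_×)ₘ`. -/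
def lamTimesN (S : Hyperring R) (e : R) (m : ℕ) (x y : R) : Prop :=
  ∃ ll ll', ll.length = m ∧ S.ValidExpr ll ∧ S.CondP e ll ll' ∧
    ((x ∈ S.SOP ll ∧ y ∈ S.SOP ll') ∨ (x ∈ S.SOP ll' ∧ y ∈ S.SOP ll))

/-- The relation `λ^e_×`. -/
def lamTimes (S : Hyperring R) (e : R) (x y : R) : Prop :=
  ∃ m, 1 ≤ m ∧ S.lamTimesN e m x y

/-- The relation `λₑ = λ^e_× ∪ α₊`. -/
def lam (S : Hyperring R) (e : R) (x y : R) : Prop :=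
  S.lamTimes e x y ∨ S.alphaPlus x y

/-- The relation `Λₑ = λ^e_× ∪ α`. -/
def Lam (S : Hyperring R) (e : R) (x y : R) : Prop :=
  S.lamTimes e x y ∨ S.alpha x y

/-- `M` is a `λₑ`-part. -/
def IsLamPart (S : Hyperring R) (e : R) (M : Set R) : Prop :=
  (∀ ll ll', S.ValidExpr ll → ll.Perm ll' → (S.SOP ll ∩ M).Nonempty → S.SOP ll' ⊆ M) ∧
  (∀ ll ll', S.ValidExpr ll → (S.CondP e ll ll' ∨ S.CondP e ll' ll) →
      (S.SOP ll ∩ M).Nonempty → S.SOP ll' ⊆ M)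

/-- A `λₑ`-strong hyperring. -/
def LamStrong (S : Hyperring R) (e : R) : Prop :=
  (∀ x y, Relation.TransGen (S.lam e) x y →
      (S.mul.op x e ∩ S.mul.op y e).Nonempty ∧ (S.mul.op e x ∩ S.mul.op e y).Nonempty) ∧
  (∀ x z, z ∈ S.mul.op x e → x ∈ S.mul.op z e) ∧
  (∀ x z, z ∈ S.mul.op e x → x ∈ S.mul.op e z)

end Hyperring

/-- The setoid given by the transitive (= equivalence) closure of `Λₑ`. -/
def LamSetoid {R : Type*} (S : Hyperring R) (e : R) : Setoid R :=
  ⟨Relation.EqvGen (S.Lam e), Relation.EqvGen.is_equivalence _⟩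

/-!
Each elementary move behind `Λₑ` (inserting a block of `e`s into a product, permuting the factors
of a product, permuting the summands) commutes with adjoining a summand `a` on either side and with
multiplying every product by `a` on either side; by associativity and distributivity these
transformations of expressions realise `a + ·`, `· + a`, `a · ·` and `· · a`. Hence `Λₑ`, and with
it its equivalence closure, is strongly regular, so both hyperoperations descend to operations on
`R/Λₑ*`. Commutativity comes from `α` (swapping two summands or two factors), the unit from
`λ^e_×` (comparing `x` with `e x` and `x e`), and the additive inverses from reproductivity: a
commutative semigroup in which every equation `a + c = b` is solvable is a group.
-/

namespace Hyperop

variable {H : Type*} (h : Hyperop H)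

theorem mem_sop {A B : Set H} {z : H} : z ∈ h.sop A B ↔ ∃ a ∈ A, ∃ b ∈ B, z ∈ h.op a b := by
  simp [sop]

theorem sop_singleton (x y : H) : h.sop {x} {y} = h.op x y := by
  ext; simp [mem_sop]

theorem op_subset_sop {A B : Set H} {a b : H} (ha : a ∈ A) (hb : b ∈ B) :
    h.op a b ⊆ h.sop A B :=
  fun _ hz => h.mem_sop.2 ⟨a, ha, b, hb, hz⟩

theorem biUnion_sop_singleton_left (A B : Set H) : ⋃ a ∈ A, h.sop {a} B = h.sop A B := by
  ext; simp [mem_sop]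

theorem sop_singleton_right (A : Set H) (b : H) : h.sop A {b} = ⋃ a ∈ A, h.op a b := by
  ext; simp [mem_sop]

theorem sop_assoc (ha : h.IsAssoc) (A B C : Set H) :
    h.sop (h.sop A B) C = h.sop A (h.sop B C) := by
  have key : ∀ x y w z, (∃ u ∈ h.op x y, z ∈ h.op u w) ↔ ∃ v ∈ h.op y w, z ∈ h.op x v :=
    fun x y w z => by simpa [mem_sop] using Set.ext_iff.mp (ha x y w) z
  ext z
  simp only [mem_sop]
  constructor
  · rintro ⟨u, ⟨a, haA, b, hb, hu⟩, c, hc, hz⟩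
    obtain ⟨v, hv, hz⟩ := (key a b c z).1 ⟨u, hu, hz⟩
    exact ⟨a, haA, v, ⟨b, hb, c, hc, hv⟩, hz⟩
  · rintro ⟨a, haA, v, ⟨b, hb, c, hc, hv⟩, hz⟩
    obtain ⟨u, hu, hz⟩ := (key a b c z).2 ⟨v, hv, hz⟩
    exact ⟨u, ⟨a, haA, b, hb, hu⟩, c, hc, hz⟩

theorem setFold_append_singleton (A : Set H) (l : List (Set H)) (B : Set H) :
    h.setFold A (l ++ [B]) = h.sop (h.setFold A l) B := by
  induction l generalizing A with
  | nil => rfl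
  | cons C l ih => exact ih (h.sop A C)

theorem setFold_sop (ha : h.IsAssoc) (A B : Set H) (l : List (Set H)) :
    h.setFold (h.sop A B) l = h.sop A (h.setFold B l) := by
  induction l generalizing B with
  | nil => rfl
  | cons C l ih => rw [setFold, h.sop_assoc ha, ih]; rfl

theorem map_setFold {f : Set H → Set H} (hf : ∀ A B, f (h.sop A B) = h.sop (f A) (f B))
    (A : Set H) (l : List (Set H)) : f (h.setFold A l) = h.setFold (f A) (l.map f) := by
  induction l generalizing A with
  | nil => rfl
  | cons B l ih => rw [setFold, ih, hf]; rfl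

theorem foldl_append_singleton (x : H) (l : List H) (a : H) :
    h.foldl x (l ++ [a]) = h.sop (h.foldl x l) {a} := by
  induction l generalizing x with
  | nil => simp [foldl, sop_singleton_right]
  | cons b l ih => simp [foldl, ih, sop_singleton_right]

theorem foldl_cons (ha : h.IsAssoc) (x y : H) (l : List H) :
    h.foldl x (y :: l) = h.sop {x} (h.foldl y l) := by
  induction l generalizing x y with
  | nil => simp [foldl, sop_singleton]
  | cons b l ih =>
    rw [foldl, ih y b, ← h.sop_assoc ha, sop_singleton, ← biUnion_sop_singleton_left]
    exact Set.iUnion₂_congr fun z _ => ih z b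

theorem listProd_append_singleton {l : List H} (hl : l ≠ []) (a : H) :
    h.listProd (l ++ [a]) = h.sop (h.listProd l) {a} := by
  obtain ⟨b, t, rfl⟩ := List.exists_cons_of_ne_nil hl
  exact h.foldl_append_singleton b t a

theorem listProd_cons (ha : h.IsAssoc) (x : H) {l : List H} (hl : l ≠ []) :
    h.listProd (x :: l) = h.sop {x} (h.listProd l) := by
  obtain ⟨b, t, rfl⟩ := List.exists_cons_of_ne_nil hl
  exact h.foldl_cons ha x b t

theorem StronglyRegular.eqvGen {T : H → H → Prop} (hT : h.StronglyRegular T)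
    (hop : ∀ x y, ∀ u ∈ h.op x y, ∀ v ∈ h.op x y, T u v) :
    h.StronglyRegular (Relation.EqvGen T) := by
  intro x y hxy a
  induction hxy with
  | rel x y hxy =>
    exact ⟨fun u hu v hv => .rel _ _ ((hT x y hxy a).1 u hu v hv),
      fun u hu v hv => .rel _ _ ((hT x y hxy a).2 u hu v hv)⟩
  | refl x => exact ⟨fun u hu v hv => .rel _ _ (hop a x u hu v hv),
      fun u hu v hv => .rel _ _ (hop x a u hu v hv)⟩
  | symm x y _ ih => exact ⟨fun u hu v hv => (ih.1 v hv u hu).symm,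
      fun u hu v hv => (ih.2 v hv u hu).symm⟩
  | trans x y z _ _ ih₁ ih₂ =>
    obtain ⟨w, hw⟩ := h.op_nonempty a y
    obtain ⟨w', hw'⟩ := h.op_nonempty y a
    exact ⟨fun u hu v hv => (ih₁.1 u hu w hw).trans _ _ _ (ih₂.1 w hw v hv),
      fun u hu v hv => (ih₁.2 u hu w' hw').trans _ _ _ (ih₂.2 w' hw' v hv)⟩

variable {s : Setoid H} (hs : h.StronglyRegular s)

noncomputable def quotOp : Quotient s → Quotient s → Quotient s :=
  Quotient.map₂ (fun x y => (h.op_nonempty x y).some) fun x x' hx y y' hy => by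
    obtain ⟨w, hw⟩ := h.op_nonempty x' y
    exact s.trans ((hs x x' hx y).2 _ (h.op_nonempty x y).some_mem w hw)
      ((hs y y' hy x').1 w hw _ (h.op_nonempty x' y').some_mem)

theorem quotOp_mk {x y z : H} (hz : z ∈ h.op x y) : h.quotOp hs ⟦x⟧ ⟦y⟧ = ⟦z⟧ :=
  Quotient.sound ((hs x x (s.refl x) y).2 _ (h.op_nonempty x y).some_mem z hz)

theorem quotOp_assoc (ha : h.IsAssoc) (a b c : Quotient s) :
    h.quotOp hs (h.quotOp hs a b) c = h.quotOp hs a (h.quotOp hs b c) := by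
  induction a, b, c using Quotient.inductionOn₃ with | h x y z => ?_
  obtain ⟨u, hu⟩ := h.op_nonempty x y
  obtain ⟨w, hw⟩ := h.op_nonempty u z
  have hw' : w ∈ h.sop {x} (h.op y z) := ha x y z ▸ h.op_subset_sop hu (Set.mem_singleton z) hw
  obtain ⟨x', rfl, t, ht, hwt⟩ := h.mem_sop.1 hw'
  rw [h.quotOp_mk hs hu, h.quotOp_mk hs hw, h.quotOp_mk hs ht, h.quotOp_mk hs hwt]

theorem quotOp_comm (hc : ∀ x y, ∀ u ∈ h.op x y, ∀ v ∈ h.op y x, s u v) (a b : Quotient s) :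
    h.quotOp hs a b = h.quotOp hs b a := by
  induction a, b using Quotient.inductionOn₂ with | h x y => ?_
  obtain ⟨u, hu⟩ := h.op_nonempty x y
  obtain ⟨v, hv⟩ := h.op_nonempty y x
  rw [h.quotOp_mk hs hu, h.quotOp_mk hs hv]
  exact Quotient.sound (hc x y u hu v hv)

theorem exists_quotOp_eq (hr : h.IsReproductive) (a b : Quotient s) :
    ∃ c, h.quotOp hs a c = b := by
  induction a, b using Quotient.inductionOn₂ with | h x y => ?_
  obtain ⟨u, hu⟩ := (hr x y).1
  exact ⟨⟦u⟧, h.quotOp_mk hs hu⟩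

theorem quotOp_mk_left_eq {e : H} (he : ∀ x, ∀ u ∈ h.op e x, s x u) (a : Quotient s) :
    h.quotOp hs ⟦e⟧ a = a := by
  induction a using Quotient.inductionOn with | h x => ?_
  obtain ⟨u, hu⟩ := h.op_nonempty e x
  rw [h.quotOp_mk hs hu]
  exact (Quotient.sound (he x u hu)).symm

theorem quotOp_mk_right_eq {e : H} (he : ∀ x, ∀ u ∈ h.op x e, s x u) (a : Quotient s) :
    h.quotOp hs a ⟦e⟧ = a := by
  induction a using Quotient.inductionOn with | h x => ?_
  obtain ⟨u, hu⟩ := h.op_nonempty x e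
  rw [h.quotOp_mk hs hu]
  exact (Quotient.sound (he x u hu)).symm

theorem quotOp_left_distrib {add : Hyperop H} (hadd : add.StronglyRegular s)
    (hd : ∀ x y z, h.sop {x} (add.op y z) = add.sop (h.op x y) (h.op x z)) (a b c : Quotient s) :
    h.quotOp hs a (add.quotOp hadd b c) = add.quotOp hadd (h.quotOp hs a b) (h.quotOp hs a c) := by
  induction a, b, c using Quotient.inductionOn₃ with | h x y z => ?_
  obtain ⟨u, hu⟩ := add.op_nonempty y z
  obtain ⟨v, hv⟩ := h.op_nonempty x u
  have hv' : v ∈ add.sop (h.op x y) (h.op x z) :=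
    hd x y z ▸ h.op_subset_sop (Set.mem_singleton x) hu hv
  obtain ⟨p, hp, q, hq, hpq⟩ := add.mem_sop.1 hv'
  rw [add.quotOp_mk hadd hu, h.quotOp_mk hs hv, h.quotOp_mk hs hp, h.quotOp_mk hs hq,
    add.quotOp_mk hadd hpq]

end Hyperop

theorem exists_neutral_and_inverses_of_solvable {α : Type*} (op : α → α → α)
    (hassoc : ∀ a b c, op (op a b) c = op a (op b c)) (hcomm : ∀ a b, op a b = op b a)
    (hsolv : ∀ a b, ∃ c, op a c = b) (a₀ : α) :
    ∃ zero, (∀ a, op zero a = a ∧ op a zero = a) ∧ ∀ a, ∃ b, op a b = zero ∧ op b a = zero := by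
  obtain ⟨zero, hzero⟩ := hsolv a₀ a₀
  have hright : ∀ a, op a zero = a := fun a => by
    obtain ⟨c, rfl⟩ := hsolv a₀ a
    rw [hassoc, hcomm c, ← hassoc, hzero]
  refine ⟨zero, fun a => ⟨hcomm a zero ▸ hright a, hright a⟩, fun a => ?_⟩
  obtain ⟨b, hb⟩ := hsolv a zero
  exact ⟨b, hb, hcomm a b ▸ hb⟩

namespace Hyperring

variable {R : Type*} (S : Hyperring R)

theorem SOP_cons (l : List R) (t : List (List R)) :
    S.SOP (l :: t) = S.add.setFold (S.mul.listProd l) (t.map S.mul.listProd) := rfl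

theorem SOP_pair_add (x y : R) : S.SOP [[x], [y]] = S.add.op x y :=
  S.add.sop_singleton x y

theorem SOP_pair_mul (x y : R) : S.SOP [[x, y]] = S.mul.op x y := by
  simp [SOP_cons, Hyperop.listProd, Hyperop.setFold, Hyperop.foldl]

theorem add_sop_singleton_SOP {ll : List (List R)} (hll : ll ≠ []) (a : R) :
    S.add.sop {a} (S.SOP ll) = S.SOP ([a] :: ll) := by
  obtain ⟨l, t, rfl⟩ := List.exists_cons_of_ne_nil hll
  rw [SOP_cons, ← S.add.setFold_sop S.add_assoc]
  rfl

theorem add_sop_SOP_singleton {ll : List (List R)} (hll : ll ≠ []) (a : R) :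
    S.add.sop (S.SOP ll) {a} = S.SOP (ll ++ [[a]]) := by
  obtain ⟨l, t, rfl⟩ := List.exists_cons_of_ne_nil hll
  rw [List.cons_append, SOP_cons, SOP_cons, List.map_append]
  exact (S.add.setFold_append_singleton _ _ _).symm

theorem mul_sop_singleton_add_sop (x : R) (B C : Set R) :
    S.mul.sop {x} (S.add.sop B C) = S.add.sop (S.mul.sop {x} B) (S.mul.sop {x} C) := by
  have key : ∀ b c z, (∃ w ∈ S.add.op b c, z ∈ S.mul.op x w) ↔
      ∃ p ∈ S.mul.op x b, ∃ q ∈ S.mul.op x c, z ∈ S.add.op p q :=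
    fun b c z => by simpa [Hyperop.mem_sop] using Set.ext_iff.mp (S.left_distrib x b c) z
  ext z
  simp only [Hyperop.mem_sop, Set.mem_singleton_iff, exists_eq_left]
  constructor
  · rintro ⟨w, ⟨b, hb, c, hc, hw⟩, hz⟩
    obtain ⟨p, hp, q, hq, hz⟩ := (key b c z).1 ⟨w, hw, hz⟩
    exact ⟨p, ⟨b, hb, hp⟩, q, ⟨c, hc, hq⟩, hz⟩
  · rintro ⟨p, ⟨b, hb, hp⟩, q, ⟨c, hc, hq⟩, hz⟩
    obtain ⟨w, hw, hz⟩ := (key b c z).2 ⟨p, hp, q, hq, hz⟩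
    exact ⟨w, ⟨b, hb, c, hc, hw⟩, hz⟩

theorem mul_sop_add_sop_singleton (x : R) (B C : Set R) :
    S.mul.sop (S.add.sop B C) {x} = S.add.sop (S.mul.sop B {x}) (S.mul.sop C {x}) := by
  have key : ∀ b c z, (∃ w ∈ S.add.op b c, z ∈ S.mul.op w x) ↔
      ∃ p ∈ S.mul.op b x, ∃ q ∈ S.mul.op c x, z ∈ S.add.op p q :=
    fun b c z => by simpa [Hyperop.mem_sop] using Set.ext_iff.mp (S.right_distrib x b c) z
  ext z
  simp only [Hyperop.mem_sop, Set.mem_singleton_iff, exists_eq_left]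
  constructor
  · rintro ⟨w, ⟨b, hb, c, hc, hw⟩, hz⟩
    obtain ⟨p, hp, q, hq, hz⟩ := (key b c z).1 ⟨w, hw, hz⟩
    exact ⟨p, ⟨b, hb, hp⟩, q, ⟨c, hc, hq⟩, hz⟩
  · rintro ⟨p, ⟨b, hb, hp⟩, q, ⟨c, hc, hq⟩, hz⟩
    obtain ⟨w, hw, hz⟩ := (key b c z).2 ⟨p, hp, q, hq, hz⟩
    exact ⟨w, ⟨b, hb, c, hc, hw⟩, hz⟩

theorem map_SOP {f : Set R → Set R} {φ : List R → List R}
    (hf : ∀ A B, f (S.add.sop A B) = S.add.sop (f A) (f B))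
    (hφ : ∀ l, l ≠ [] → f (S.mul.listProd l) = S.mul.listProd (φ l))
    {ll : List (List R)} (hll : S.ValidExpr ll) : f (S.SOP ll) = S.SOP (ll.map φ) := by
  obtain ⟨hne, hall⟩ := hll
  obtain ⟨l, t, rfl⟩ := List.exists_cons_of_ne_nil hne
  rw [List.map_cons, SOP_cons, SOP_cons, S.add.map_setFold hf, hφ l (hall l (by simp)),
    List.map_map, List.map_map]
  exact congrArg _ (List.map_congr_left fun l' hl' => hφ l' (hall l' (by simp [hl'])))

theorem mul_sop_singleton_SOP (x : R) {ll : List (List R)} (hll : S.ValidExpr ll) :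
    S.mul.sop {x} (S.SOP ll) = S.SOP (ll.map (x :: ·)) :=
  S.map_SOP (f := S.mul.sop {x}) (S.mul_sop_singleton_add_sop x)
    (fun _ hl => (S.mul.listProd_cons S.mul_assoc x hl).symm) hll

theorem mul_sop_SOP_singleton (x : R) {ll : List (List R)} (hll : S.ValidExpr ll) :
    S.mul.sop (S.SOP ll) {x} = S.SOP (ll.map (· ++ [x])) :=
  S.map_SOP (f := (S.mul.sop · {x})) (S.mul_sop_add_sop_singleton x)
    (fun _ hl => (S.mul.listProd_append_singleton hl x).symm) hll

end Hyperring

namespace InsertBlock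

variable {α : Type*} {e : α} {l l' : List α}

theorem refl (e : α) (l : List α) : InsertBlock e l l := Or.inl rfl

theorem ne_nil (h : InsertBlock e l l') (hl : l ≠ []) : l' ≠ [] := by
  rcases h with rfl | ⟨p, q, k, hk, rfl, rfl⟩
  · exact hl
  · simp [Nat.one_le_iff_ne_zero.1 hk]

theorem cons (a : α) (h : InsertBlock e l l') : InsertBlock e (a :: l) (a :: l') := by
  rcases h with rfl | ⟨p, q, k, hk, rfl, rfl⟩
  · exact refl e _
  · exact Or.inr ⟨a :: p, q, k, hk, rfl, rfl⟩

theorem append_singleton (a : α) (h : InsertBlock e l l') :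
    InsertBlock e (l ++ [a]) (l' ++ [a]) := by
  rcases h with rfl | ⟨p, q, k, hk, rfl, rfl⟩
  · exact refl e _
  · exact Or.inr ⟨p, q ++ [a], k, hk, by simp, by simp⟩

end InsertBlock

namespace Hyperring

variable {R : Type*} {S : Hyperring R}

theorem ValidExpr.of_forall₂ {r : List R → List R → Prop}
    (hr : ∀ l l', r l l' → l ≠ [] → l' ≠ []) {ll ll' : List (List R)}
    (h : List.Forall₂ r ll ll') (hv : S.ValidExpr ll) : S.ValidExpr ll' := by
  refine ⟨by rintro rfl; exact hv.1 (List.forall₂_nil_right_iff.1 h), ?_⟩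
  have hall := hv.2
  clear hv
  induction h with
  | nil => simp
  | cons hab _ ih =>
    simp only [List.mem_cons, forall_eq_or_imp] at hall ⊢
    exact ⟨hr _ _ hab hall.1, ih hall.2⟩

theorem ValidExpr.perm {ll ll' : List (List R)} (hv : S.ValidExpr ll) (h : ll.Perm ll') :
    S.ValidExpr ll' :=
  ⟨fun h' => hv.1 (h' ▸ h).eq_nil, fun l hl => hv.2 l (h.mem_iff.2 hl)⟩

theorem ValidExpr.map {ll : List (List R)} (hv : S.ValidExpr ll) {φ : List R → List R}
    (hφ : ∀ l, φ l ≠ []) : S.ValidExpr (ll.map φ) :=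
  ⟨by simpa using hv.1, by simpa using fun l _ => hφ l⟩

theorem ValidExpr.cons {ll : List (List R)} (hv : S.ValidExpr ll) {l : List R} (hl : l ≠ []) :
    S.ValidExpr (l :: ll) :=
  ⟨List.cons_ne_nil l ll, by simpa using ⟨hl, hv.2⟩⟩

theorem ValidExpr.append {ll : List (List R)} (hv : S.ValidExpr ll) {l : List R} (hl : l ≠ []) :
    S.ValidExpr (ll ++ [l]) :=
  ⟨by simp, by simpa [or_imp, forall_and] using ⟨hv.2, hl⟩⟩

variable {e : R}

theorem Lam.transport {x y : R} (hxy : S.Lam e x y)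
    (f : List (List R) → List (List R)) (g : R → Set R)
    (hg : ∀ ll, S.ValidExpr ll → ∀ z ∈ S.SOP ll, g z ⊆ S.SOP (f ll))
    (hvalid : ∀ ll, S.ValidExpr ll → S.ValidExpr (f ll))
    (hcond : ∀ ll ll', S.CondP e ll ll' → S.CondP e (f ll) (f ll'))
    (hfactors : ∀ ll ll', List.Forall₂ List.Perm ll ll' →
      List.Forall₂ List.Perm (f ll) (f ll'))
    (hsummands : ∀ ll ll', ll.Perm ll' → (f ll).Perm (f ll')) :
    ∀ u ∈ g x, ∀ v ∈ g y, S.Lam e u v := by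
  intro u hu v hv
  rcases hxy with ⟨-, -, ll, ll', -, hll, hc, hxy⟩ | ⟨ll, mid, ll', hll, hf, hs, hx, hy⟩
  · have hll' : S.ValidExpr ll' := hll.of_forall₂ (fun _ _ h => h.ne_nil) hc
    refine Or.inl ⟨_, List.length_pos_iff.2 (hvalid ll hll).1, f ll, f ll', rfl,
      hvalid ll hll, hcond ll ll' hc, ?_⟩
    rcases hxy with ⟨hx, hy⟩ | ⟨hx, hy⟩
    · exact Or.inl ⟨hg ll hll x hx hu, hg ll' hll' y hy hv⟩
    · exact Or.inr ⟨hg ll' hll' x hx hu, hg ll hll y hy hv⟩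
  · have hll' : S.ValidExpr ll' :=
      (hll.of_forall₂ (fun _ _ h hl h' => hl (h' ▸ h).eq_nil) hf).perm hs
    exact Or.inr ⟨f ll, f mid, f ll', hvalid ll hll, hfactors ll mid hf, hsummands mid ll' hs,
      hg ll hll x hx hu, hg ll' hll' y hy hv⟩

variable (S e)

theorem add_stronglyRegular_Lam : S.add.StronglyRegular (S.Lam e) := by
  intro x y hxy a
  constructor
  · refine hxy.transport ([a] :: ·) (S.add.op a) (fun ll hll z hz => ?_)
      (fun _ hll => hll.cons (List.cons_ne_nil a []))
      (fun _ _ h => .cons (InsertBlock.refl e _) h) (fun _ _ h => .cons (.refl _) h)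
      (fun _ _ h => h.cons _)
    rw [← S.add_sop_singleton_SOP hll.1]
    exact S.add.op_subset_sop rfl hz
  · refine hxy.transport (· ++ [[a]]) (S.add.op · a) (fun ll hll z hz => ?_)
      (fun _ hll => hll.append (List.cons_ne_nil a []))
      (fun _ _ h => List.rel_append h (.cons (InsertBlock.refl e _) .nil))
      (fun _ _ h => List.rel_append h (.cons (.refl _) .nil)) (fun _ _ h => h.append_right _)
    rw [← S.add_sop_SOP_singleton hll.1]
    exact S.add.op_subset_sop hz rfl

theorem mul_stronglyRegular_Lam : S.mul.StronglyRegular (S.Lam e) := by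
  intro x y hxy a
  constructor
  · refine hxy.transport (List.map (a :: ·)) (S.mul.op a) (fun ll hll z hz => ?_)
      (fun _ hll => hll.map fun l => List.cons_ne_nil a l)
      (fun _ _ h => List.rel_map (fun _ _ hb => hb.cons a) h)
      (fun _ _ h => List.rel_map (fun _ _ hb => hb.cons a) h) (fun _ _ h => h.map _)
    rw [← S.mul_sop_singleton_SOP a hll]
    exact S.mul.op_subset_sop rfl hz
  · refine hxy.transport (List.map (· ++ [a])) (S.mul.op · a) (fun ll hll z hz => ?_)
      (fun _ hll => hll.map fun l => List.concat_ne_nil a l)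
      (fun _ _ h => List.rel_map (fun _ _ hb => hb.append_singleton a) h)
      (fun _ _ h => List.rel_map (fun _ _ hb => hb.append_right [a]) h) (fun _ _ h => h.map _)
    rw [← S.mul_sop_SOP_singleton a hll]
    exact S.mul.op_subset_sop hz rfl

theorem alpha_of_perm {ll ll' : List (List R)} (hll : S.ValidExpr ll) (h : ll.Perm ll')
    {x y : R} (hx : x ∈ S.SOP ll) (hy : y ∈ S.SOP ll') : S.alpha x y :=
  ⟨ll, ll, ll', hll, List.forall₂_same.2 fun l _ => .refl l, h, hx, hy⟩

theorem alpha_of_forall₂_perm {ll ll' : List (List R)} (hll : S.ValidExpr ll)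
    (h : List.Forall₂ List.Perm ll ll') {x y : R} (hx : x ∈ S.SOP ll) (hy : y ∈ S.SOP ll') :
    S.alpha x y :=
  ⟨ll, ll', ll', hll, h, .refl ll', hx, hy⟩

variable {S e}

theorem Lam_of_mem_add_op {x y u v : R} (hu : u ∈ S.add.op x y) (hv : v ∈ S.add.op x y) :
    S.Lam e u v :=
  .inr <| S.alpha_of_perm (ll := [[x], [y]]) (by simp [ValidExpr]) (.refl _)
    (S.SOP_pair_add x y ▸ hu) (S.SOP_pair_add x y ▸ hv)

theorem Lam_of_mem_add_op_swap {x y u v : R} (hu : u ∈ S.add.op x y) (hv : v ∈ S.add.op y x) :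
    S.Lam e u v :=
  .inr <| S.alpha_of_perm (ll := [[x], [y]]) (by simp [ValidExpr]) (.swap _ _ _)
    (S.SOP_pair_add x y ▸ hu) (S.SOP_pair_add y x ▸ hv)

theorem Lam_of_mem_mul_op {x y u v : R} (hu : u ∈ S.mul.op x y) (hv : v ∈ S.mul.op x y) :
    S.Lam e u v :=
  .inr <| S.alpha_of_perm (ll := [[x, y]]) (by simp [ValidExpr]) (.refl _)
    (S.SOP_pair_mul x y ▸ hu) (S.SOP_pair_mul x y ▸ hv)

theorem Lam_of_mem_mul_op_swap {x y u v : R} (hu : u ∈ S.mul.op x y) (hv : v ∈ S.mul.op y x) :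
    S.Lam e u v :=
  .inr <| S.alpha_of_forall₂_perm (ll := [[x, y]]) (by simp [ValidExpr])
    (.cons (.swap _ _ _) .nil) (S.SOP_pair_mul x y ▸ hu) (S.SOP_pair_mul y x ▸ hv)

theorem lamTimes_of_mem_mul_op_left {x u : R} (hu : u ∈ S.mul.op e x) : S.lamTimes e x u :=
  ⟨1, le_rfl, [[x]], [[e, x]], rfl, by simp [ValidExpr],
    .cons (.inr ⟨[], [x], 1, le_rfl, rfl, rfl⟩) .nil, .inl ⟨rfl, S.SOP_pair_mul e x ▸ hu⟩⟩

theorem lamTimes_of_mem_mul_op_right {x u : R} (hu : u ∈ S.mul.op x e) : S.lamTimes e x u :=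
  ⟨1, le_rfl, [[x]], [[x, e]], rfl, by simp [ValidExpr],
    .cons (.inr ⟨[x], [], 1, le_rfl, rfl, rfl⟩) .nil, .inl ⟨rfl, S.SOP_pair_mul x e ▸ hu⟩⟩

end Hyperring

/-- `Λₑ*` is strongly regular on both operations and the quotient
`R/Λₑ*` is a commutative ring with identity the class of `e`. -/
theorem stmt19 {R : Type*} (S : Hyperring R) (e : R) :
    S.add.StronglyRegular (Relation.EqvGen (S.Lam e)) ∧
    S.mul.StronglyRegular (Relation.EqvGen (S.Lam e)) ∧
    ∃ padd pmul : Quotient (LamSetoid S e) → Quotient (LamSetoid S e) → Quotient (LamSetoid S e),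
      (∀ x y : R, ∀ z ∈ S.add.op x y,
        padd (Quotient.mk _ x) (Quotient.mk _ y) = Quotient.mk (LamSetoid S e) z) ∧
      (∀ x y : R, ∀ z ∈ S.mul.op x y,
        pmul (Quotient.mk _ x) (Quotient.mk _ y) = Quotient.mk (LamSetoid S e) z) ∧
      (∀ a b c, padd (padd a b) c = padd a (padd b c)) ∧
      (∀ a b, padd a b = padd b a) ∧
      (∃ zero, (∀ a, padd zero a = a ∧ padd a zero = a) ∧
        ∀ a, ∃ b, padd a b = zero ∧ padd b a = zero) ∧
      (∀ a b c, pmul (pmul a b) c = pmul a (pmul b c)) ∧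
      (∀ a b, pmul a b = pmul b a) ∧
      (∀ a b c, pmul a (padd b c) = padd (pmul a b) (pmul a c)) ∧
      (∀ a b c, pmul (padd a b) c = padd (pmul a c) (pmul b c)) ∧
      (∀ a, pmul (Quotient.mk (LamSetoid S e) e) a = a ∧
            pmul a (Quotient.mk (LamSetoid S e) e) = a) := by
  have hadd : S.add.StronglyRegular (LamSetoid S e) :=
    (S.add_stronglyRegular_Lam e).eqvGen _ fun _ _ _ hu _ hv => Hyperring.Lam_of_mem_add_op hu hv
  have hmul : S.mul.StronglyRegular (LamSetoid S e) :=
    (S.mul_stronglyRegular_Lam e).eqvGen _ fun _ _ _ hu _ hv => Hyperring.Lam_of_mem_mul_op hu hv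
  have hadd_comm := S.add.quotOp_comm hadd fun _ _ _ hu _ hv =>
    .rel _ _ (Hyperring.Lam_of_mem_add_op_swap hu hv)
  have hmul_comm := S.mul.quotOp_comm hmul fun _ _ _ hu _ hv =>
    .rel _ _ (Hyperring.Lam_of_mem_mul_op_swap hu hv)
  have hdistrib := S.mul.quotOp_left_distrib hmul hadd S.left_distrib
  refine ⟨hadd, hmul, S.add.quotOp hadd, S.mul.quotOp hmul,
    fun _ _ _ => S.add.quotOp_mk hadd, fun _ _ _ => S.mul.quotOp_mk hmul,
    S.add.quotOp_assoc hadd S.add_assoc, hadd_comm,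
    exists_neutral_and_inverses_of_solvable _ (S.add.quotOp_assoc hadd S.add_assoc) hadd_comm
      (S.add.exists_quotOp_eq hadd S.add_repro) ⟦e⟧,
    S.mul.quotOp_assoc hmul S.mul_assoc, hmul_comm, hdistrib,
    fun a b c => by rw [hmul_comm _ c, hdistrib, hmul_comm c, hmul_comm c],
    fun a => ⟨S.mul.quotOp_mk_left_eq hmul (fun _ _ hu => .rel _ _ (.inl
      (Hyperring.lamTimes_of_mem_mul_op_left hu))) a, S.mul.quotOp_mk_right_eq hmul
      (fun _ _ hu => .rel _ _ (.inl (Hyperring.lamTimes_of_mem_mul_op_right hu))) a⟩⟩
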